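/- arXiv:1807.06285 — 4 statements merged into one kernel-verified Lean document; each statement's English description precedes it below -/
import Mathlib

section
/- Let Y be a finite linearly ordered set, let s ≥ 1 be a real number, and let X ⊆ Y. Then X is s-sparse in Y if and only if for every integer k with 1 ≤ k ≤ |Y| one has |Y_k ∩ X| < k/s, where Y_k denotes the set of the first k elements of Y. -/
/-- The set of the first `k` elements of the finite linearly ordered set `Y`
(all of `Y` if `k > |Y|`). -/
def firstK {α : Type*} [LinearOrder α] (Y : Finset α) (k : ℕ) : Finset α :=
  ((Y.sort (· ≤ ·)).take k).toFinset

/-- For a real `s ≥ 1`, a subset `X ⊆ Y` is `s`-principal in `Y` if `X` is nonempty and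
`X ⊆ Y_{⌊s·|X|⌋}`, i.e. all elements of `X` are among the first `⌊s·|X|⌋` elements of `Y`. -/
def IsPrincipal {α : Type*} [LinearOrder α] (s : ℝ) (Y X : Finset α) : Prop :=
  X.Nonempty ∧ X ⊆ firstK Y ⌊s * X.card⌋₊

/-- `X` is `s`-sparse in `Y` if `X` contains no (nonempty) subset that is `s`-principal in `Y`. -/
def IsSparse {α : Type*} [LinearOrder α] (s : ℝ) (Y X : Finset α) : Prop :=
  ∀ Z ⊆ X, ¬ IsPrincipal s Y Z

lemma firstK_mono {α : Type*} [LinearOrder α] (Y : Finset α) {k m : ℕ} (h : k ≤ m) :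
    firstK Y k ⊆ firstK Y m := by
  intro x hx
  simp only [firstK, List.mem_toFinset] at hx ⊢
  have hkk : (Y.sort (· ≤ ·)).take k = ((Y.sort (· ≤ ·)).take m).take k := by
    rw [List.take_take, min_eq_left h]
  rw [hkk] at hx
  exact List.take_subset _ _ hx

lemma firstK_card {α : Type*} [LinearOrder α] (Y : Finset α) : firstK Y Y.card = Y := by
  rw [firstK, ← Y.length_sort (· ≤ ·), List.take_length, Finset.sort_toFinset]

theorem sparse_characterization {α : Type*} [LinearOrder α]
    (s : ℝ) (hs : 1 ≤ s) (Y X : Finset α) (hXY : X ⊆ Y) :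
    IsSparse s Y X ↔
      ∀ k : ℕ, 1 ≤ k → k ≤ Y.card → ((firstK Y k ∩ X).card : ℝ) < (k : ℝ) / s := by
  have hs0 : (0 : ℝ) < s := lt_of_lt_of_le one_pos hs
  constructor
  · intro hsp k hk1 hkY
    by_contra hlt
    push_neg at hlt
    set Z := firstK Y k ∩ X with hZ
    have hZX : Z ⊆ X := Finset.inter_subset_right
    have hkle : (k : ℝ) ≤ s * Z.card := by
      rw [div_le_iff₀ hs0] at hlt
      linarith
    have hZne : Z.Nonempty := by
      rw [← Finset.card_pos, Nat.pos_iff_ne_zero]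
      intro h0
      rw [h0] at hkle
      have : (1 : ℝ) ≤ (k : ℝ) := by exact_mod_cast hk1
      simp at hkle
      linarith
    refine hsp Z hZX ⟨hZne, ?_⟩
    have hkf : k ≤ ⌊s * Z.card⌋₊ := Nat.le_floor hkle
    exact (Finset.inter_subset_left).trans (firstK_mono Y hkf)
  · rintro h Z hZX ⟨hZne, hZsub⟩
    have hZY : Z ⊆ Y := hZX.trans hXY
    set m := ⌊s * Z.card⌋₊ with hm
    set k := min m Y.card with hk
    have hZk : Z ⊆ firstK Y k := by
      rcases le_or_gt m Y.card with hc | hc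
      · rw [hk, min_eq_left hc]; exact hZsub
      · rw [hk, min_eq_right hc.le, firstK_card]; exact hZY
    have hcard1 : (1 : ℝ) ≤ (Z.card : ℝ) := by
      exact_mod_cast Finset.card_pos.mpr hZne
    have h1m : 1 ≤ m := Nat.le_floor (by push_cast; nlinarith)
    have h1Y : 1 ≤ Y.card := Finset.card_pos.mpr (hZne.mono hZY)
    have h1k : 1 ≤ k := le_min h1m h1Y
    have hklt := h k h1k (min_le_right _ _)
    have hcard : (Z.card : ℝ) ≤ ((firstK Y k ∩ X).card : ℝ) := by
      exact_mod_cast Finset.card_le_card (Finset.subset_inter hZk hZX)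
    have hkm : (k : ℝ) ≤ s * Z.card :=
      le_trans (by exact_mod_cast min_le_left m Y.card) (Nat.floor_le (by positivity))
    rw [lt_div_iff₀ hs0] at hklt
    nlinarith
end

section
/- Let Y be a finite linearly ordered set, let w : Y → ℝ≥0 be a weight function that is non-increasing along the order (if y precedes y′ in the order then w(y) ≥ w(y′)), and let s ≥ 1 be a real number. If X ⊆ Y is s-sparse in Y, then ∑_{v∈X} w(v) ≤ (1/s)·∑_{v∈Y} w(v). -/
/-!
Induct on `Y` by removing its last element `a`, whose weight `t = w a` is the smallest.
Splitting `w = (w - t) + t`, the part `w - t` vanishes at `a`, so it is handled by the induction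
hypothesis for `X \ {a}`, which stays sparse in the prefix `Y \ {a}`. The constant part `t`
needs only the counting bound `s·|X| ≤ |Y|`, which holds because otherwise `Y_{⌊s·|X|⌋} = Y ⊇ X`
would make `X` itself principal.
-/

open Finset

section

variable {α : Type*} [LinearOrder α]

theorem Finset.sort_insert_of_forall_lt {s : Finset α} {a : α} (h : ∀ b ∈ s, b < a) :
    (insert a s).sort (· ≤ ·) = s.sort (· ≤ ·) ++ [a] := by
  have hnodup : (s.sort (· ≤ ·) ++ [a]).Nodup :=
    List.nodup_append.2 ⟨s.sort_nodup _, List.nodup_singleton a,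
      by simpa using fun b hb => (h b hb).ne⟩
  have hsorted : (s.sort (· ≤ ·) ++ [a]).Pairwise (· ≤ ·) :=
    List.pairwise_append.2 ⟨s.pairwise_sort _, List.pairwise_singleton _ a,
      by simpa using fun b hb => (h b hb).le⟩
  have hset : (s.sort (· ≤ ·) ++ [a]).toFinset = insert a s := by
    ext; simp
  rw [← hset]
  exact (List.toFinset_sort _ hnodup).2 hsorted

lemma firstK_of_card_le {Y : Finset α} {k : ℕ} (h : Y.card ≤ k) : firstK Y k = Y := by
  rw [firstK, List.take_of_length_le (by rwa [length_sort]), sort_toFinset]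

lemma firstK_subset_firstK_insert {Y : Finset α} {a : α} (h : ∀ b ∈ Y, b < a) (k : ℕ) :
    firstK Y k ⊆ firstK (insert a Y) k := by
  intro v hv
  rw [firstK, List.mem_toFinset] at hv ⊢
  rw [sort_insert_of_forall_lt h, List.take_append]
  exact List.mem_append_left _ hv

namespace IsSparse

variable {s : ℝ} {Y X : Finset α}

lemma mul_card_le (hX : IsSparse s Y X) (hXY : X ⊆ Y) : s * X.card ≤ Y.card := by
  rcases X.eq_empty_or_nonempty with rfl | hne
  · simp
  by_contra! hlt
  exact hX X Subset.rfl ⟨hne, by rwa [firstK_of_card_le (Nat.le_floor hlt.le)]⟩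

lemma erase_of_insert {a : α} (hX : IsSparse s (insert a Y) X) (h : ∀ b ∈ Y, b < a) :
    IsSparse s Y (X.erase a) :=
  fun Z hZ ⟨hne, hsub⟩ =>
    hX Z (hZ.trans (erase_subset a X)) ⟨hne, hsub.trans (firstK_subset_firstK_insert h _)⟩

lemma mul_sum_le {w : α → ℝ} (hX : IsSparse s Y X) (hXY : X ⊆ Y) (hw0 : ∀ v ∈ Y, 0 ≤ w v)
    (hmono : ∀ a ∈ Y, ∀ b ∈ Y, a ≤ b → w b ≤ w a) :
    s * ∑ v ∈ X, w v ≤ ∑ v ∈ Y, w v := by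
  induction Y using Finset.induction_on_max generalizing w X with
  | empty => simp [subset_empty.1 hXY]
  | insert a Y hlt ih =>
    set t := w a
    have ht : 0 ≤ t := hw0 a (mem_insert_self a Y)
    have hXY' : X.erase a ⊆ Y := fun v hv =>
      (mem_insert.1 (hXY (mem_of_mem_erase hv))).resolve_left (ne_of_mem_erase hv)
    have hind : s * ∑ v ∈ X.erase a, (w v - t) ≤ ∑ v ∈ Y, (w v - t) :=
      ih (hX.erase_of_insert hlt) hXY'
        (fun v hv => sub_nonneg.2 <|
          hmono v (mem_insert_of_mem hv) a (mem_insert_self a Y) (hlt v hv).le)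
        (fun b hb c hc hbc => sub_le_sub_right
          (hmono b (mem_insert_of_mem hb) c (mem_insert_of_mem hc) hbc) t)
    have hcard : t * (s * X.card) ≤ t * (insert a Y).card :=
      mul_le_mul_of_nonneg_left (hX.mul_card_le hXY) ht
    have hsplit (A : Finset α) : ∑ v ∈ A, w v = ∑ v ∈ A, (w v - t) + t * A.card := by
      rw [sum_sub_distrib, sum_const, nsmul_eq_mul]; ring
    calc s * ∑ v ∈ X, w v
          = s * ∑ v ∈ X.erase a, (w v - t) + t * (s * X.card) := by
          rw [hsplit, sum_erase X (f := fun v => w v - t) (sub_self t)]; ring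
      _ ≤ ∑ v ∈ Y, (w v - t) + t * (insert a Y).card := add_le_add hind hcard
      _ = ∑ v ∈ insert a Y, w v := by
          rw [hsplit, sum_insert fun ha => (hlt a ha).false, sub_self, zero_add]

end IsSparse

end

theorem sparse_weight_le {α : Type*} [LinearOrder α]
    (Y : Finset α) (w : α → ℝ) (hw0 : ∀ v ∈ Y, 0 ≤ w v)
    (hmono : ∀ a ∈ Y, ∀ b ∈ Y, a ≤ b → w b ≤ w a)
    (s : ℝ) (hs : 1 ≤ s) (X : Finset α) (hXY : X ⊆ Y) (hX : IsSparse s Y X) :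
    ∑ v ∈ X, w v ≤ (1 / s) * ∑ v ∈ Y, w v := by
  rw [one_div_mul_eq_div, le_div_iff₀' (by linarith)]
  exact hX.mul_sum_le hXY hw0 hmono
end

section
/- Let G be a finite simple graph on vertex set V, let w : V → ℝ≥0 be a weight function, and fix a linear order on V along which w is non-increasing. Let s ≥ 1 and x ≥ 0 be real numbers. Suppose A ⊆ V is a vertex set such that no nonempty subset of V that is s-principal in V and has average degree at least x in G is contained in A (i.e., A contains no s-principal set of average degree ≥ x in G), and suppose that every subset of A that is an independent set of G has total w-weight at most 1. Then ∑_{v∈A} w(v) ≤ 2·⌊x+1⌋ + (2/s)·∑_{v∈V} w(v). (The average degree of a nonempty set X in G is 2·e_G(X)/|X|, where e_G(X) is the number of edges of G with both endpoints in X.) -/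
open Classical in
/-- The number of edges of `G` with both endpoints in `A`. -/
noncomputable def edgesIn {V : Type*} [Fintype V] [DecidableEq V] (G : SimpleGraph V)
    [DecidableRel G.Adj] (A : Finset V) : ℕ :=
  (G.edgeFinset.filter fun e => ∀ v ∈ e, v ∈ A).card

/-!
Call `v ∈ A` good if the prefix `A_{≤v}` is `s`-principal; then `2 e(A_{≤v}) < x |A_{≤v}|` and
`x < d := ⌊x + 1⌋`. Split the good vertices by the number of their neighbours in `A` that precede
them: the set `H` where it is at least `d`, and the rest, which is greedily `d`-colourable along
the order and so weighs at most `d`. Every vertex of `H` accounts for `d` edges inside a good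
prefix, so `H` fills less than half of every good prefix; as `w` is non-increasing,
`2 w(H) ≤ w(A)`. A bad `v` lies beyond the first `s |A_{≤v}|` vertices of `V`, so the bad vertices
are `s` times sparser than `V` in every initial segment, whence `s w(bad) ≤ w(V)`. Adding up,
`w(A) ≤ w(A)/2 + d + w(V)/s`.
-/

open Finset

section

variable {α : Type*} [LinearOrder α]

theorem mem_firstK_of_card_filter_le {Y : Finset α} {k : ℕ} {v : α} (hv : v ∈ Y)
    (hk : #(Y.filter (· ≤ v)) ≤ k) : v ∈ firstK Y k := by
  set L := Y.sort (· ≤ ·)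
  obtain ⟨j, hj, rfl⟩ := List.getElem_of_mem ((mem_sort (· ≤ ·)).2 hv)
  have hprefix : (L.take (j + 1)).toFinset ⊆ Y.filter (· ≤ L[j]) := by
    intro u hu
    obtain ⟨i, hi, rfl⟩ := List.getElem_of_mem (List.mem_toFinset.1 hu)
    simp only [List.getElem_take, List.length_take] at hi ⊢
    exact mem_filter.2 ⟨(mem_sort (· ≤ ·)).1 (List.getElem_mem _),
      (sortedLT_sort Y).sortedLE.getElem_le_getElem_of_le (by omega)⟩
  have hcard := (card_le_card hprefix).trans hk
  rw [List.toFinset_card_of_nodup ((sort_nodup Y (· ≤ ·)).sublist (List.take_sublist _ _)),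
    List.length_take] at hcard
  exact List.mem_toFinset.2
    (List.mem_iff_getElem.2 ⟨j, by simp only [List.length_take]; omega, by simp⟩)

theorem mul_card_filter_le_lt_of_not_isPrincipal {s : ℝ} {Y A : Finset α} {v : α} (hAY : A ⊆ Y)
    (hv : v ∈ A) (h : ¬ IsPrincipal s Y (A.filter (· ≤ v))) :
    s * #(A.filter (· ≤ v)) < #(Y.filter (· ≤ v)) := by
  set X := A.filter (· ≤ v)
  obtain ⟨u, huX, hu⟩ := not_subset.1 fun hsub => h ⟨⟨v, mem_filter.2 ⟨hv, le_rfl⟩⟩, hsub⟩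
  obtain ⟨huA, huv⟩ := mem_filter.1 huX
  have hlt : ⌊s * #X⌋₊ < #(Y.filter (· ≤ u)) :=
    lt_of_not_ge fun hle => hu (mem_firstK_of_card_filter_le (hAY huA) hle)
  calc s * #X < ⌊s * #X⌋₊ + 1 := Nat.lt_floor_add_one _
    _ ≤ #(Y.filter (· ≤ u)) := by exact_mod_cast hlt
    _ ≤ #(Y.filter (· ≤ v)) := by
      exact_mod_cast card_le_card (monotone_filter_right Y fun _ _ h => le_trans h huv)

theorem mul_sum_le_sum_of_mul_card_filter_le {g : α → ℝ} (hg : Antitone g) (hg0 : ∀ i, 0 ≤ g i)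
    {c : ℝ} {S T : Finset α} (h : ∀ i ∈ S, c * #(S.filter (· ≤ i)) ≤ #(T.filter (· ≤ i))) :
    c * ∑ i ∈ S, g i ≤ ∑ i ∈ T, g i := by
  induction S using Finset.induction_on_max generalizing g with
  | empty => simpa using sum_nonneg fun i _ => hg0 i
  | insert a S hlt ih =>
    -- `g = min g (g a) + r`: the first layer is constant on `insert a S`, and `r a = 0`
    set r : α → ℝ := fun i => max (g i - g a) 0
    have hr : Antitone r := fun i j hij => max_le_max (sub_le_sub_right (hg hij) _) le_rfl
    have hsplit : ∀ i, g i = min (g i) (g a) + r i := fun i => by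
      simp only [r]; rcases le_total (g i) (g a) with hi | hi <;> simp [hi]
    have haS : a ∉ S := fun ha => (hlt a ha).false
    have hle : ∀ i ∈ insert a S, i ≤ a := fun i hi =>
      (mem_insert.1 hi).elim le_of_eq fun hi => (hlt i hi).le
    have hrest : c * ∑ i ∈ S, r i ≤ ∑ i ∈ T, r i := by
      refine ih hr (fun i => le_max_right _ _) fun i hi => ?_
      have := h i (mem_insert_of_mem hi)
      rwa [filter_insert, if_neg (not_le.2 (hlt i hi))] at this
    have hlayer : c * #(insert a S) * g a ≤ ∑ i ∈ T, min (g i) (g a) := by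
      have hcard := h a (mem_insert_self a S)
      rw [filter_true_of_mem hle] at hcard
      calc c * #(insert a S) * g a ≤ #(T.filter (· ≤ a)) * g a :=
            mul_le_mul_of_nonneg_right hcard (hg0 a)
        _ = ∑ i ∈ T.filter (· ≤ a), min (g i) (g a) := by
            rw [sum_congr rfl fun i hi => min_eq_right (hg (mem_filter.1 hi).2)]; simp
        _ ≤ ∑ i ∈ T, min (g i) (g a) :=
            sum_le_sum_of_subset_of_nonneg (filter_subset _ _) fun i _ _ => le_min (hg0 i) (hg0 a)
    have hsum : ∑ i ∈ insert a S, g i = #(insert a S) * g a + ∑ i ∈ S, r i := by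
      rw [sum_congr rfl fun i _ => hsplit i, sum_add_distrib,
        sum_congr rfl fun i hi => min_eq_right (hg (hle i hi))]
      simp [r, haS]
    calc c * ∑ i ∈ insert a S, g i = c * #(insert a S) * g a + c * ∑ i ∈ S, r i := by
          rw [hsum]; ring
      _ ≤ ∑ i ∈ T, min (g i) (g a) + ∑ i ∈ T, r i := add_le_add hlayer hrest
      _ = ∑ i ∈ T, g i := by
          rw [← sum_add_distrib]; exact sum_congr rfl fun i _ => (hsplit i).symm

end

namespace SimpleGraph

theorem two_mul_edgesIn_lt_floor_mul_card {V : Type*} [Fintype V] [DecidableEq V]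
    {G : SimpleGraph V} [DecidableRel G.Adj] {X : Finset V} {x : ℝ}
    (hX : X.Nonempty) (h : ¬ x ≤ 2 * (edgesIn G X : ℝ) / #X) :
    2 * edgesIn G X < ⌊x + 1⌋₊ * #X := by
  have hpos : (0 : ℝ) < #X := by exact_mod_cast hX.card_pos
  have hxd : x < ⌊x + 1⌋₊ := by linarith [Nat.lt_floor_add_one (x + 1)]
  rw [not_le, div_lt_iff₀ hpos] at h
  exact_mod_cast h.trans (mul_lt_mul_of_pos_right hxd hpos)

variable {V : Type*} [LinearOrder V] (G : SimpleGraph V) [DecidableRel G.Adj]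

def backDegree (X : Finset V) (v : V) : ℕ := #(X.filter fun u => u < v ∧ G.Adj u v)

variable {G}

theorem backDegree_mono {X Y : Finset V} (hXY : X ⊆ Y) (v : V) :
    G.backDegree X v ≤ G.backDegree Y v :=
  card_le_card (filter_subset_filter _ hXY)

theorem exists_coloring_of_backDegree_lt {L : Finset V} {d : ℕ}
    (h : ∀ v ∈ L, G.backDegree L v < d) :
    ∃ c : V → ℕ, (∀ v ∈ L, c v < d) ∧ ∀ u ∈ L, ∀ v ∈ L, G.Adj u v → c u ≠ c v := by
  induction L using Finset.induction_on_max with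
  | empty => exact ⟨fun _ => 0, by simp⟩
  | insert a L hlt ih =>
    obtain ⟨c, hcd, hc⟩ := ih fun v hv =>
      (backDegree_mono (subset_insert a L) v).trans_lt (h v (mem_insert_of_mem hv))
    have hused : #((L.filter (G.Adj · a)).image c) < #(range d) := by
      have hdeg := h a (mem_insert_self a L)
      refine card_image_le.trans_lt ((card_le_card fun u hu => ?_).trans_lt (by simpa [backDegree]))
      obtain ⟨huL, hua⟩ := mem_filter.1 hu
      exact mem_filter.2 ⟨mem_insert_of_mem huL, hlt u huL, hua⟩
    obtain ⟨γ, hγd, hγ⟩ := exists_mem_notMem_of_card_lt_card hused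
    have haL : a ∉ L := fun ha => (hlt a ha).false
    have hfresh : ∀ u ∈ L, G.Adj u a → Function.update c a γ u ≠ Function.update c a γ a := by
      intro u hu hua
      rw [Function.update_self, Function.update_of_ne (ne_of_mem_of_not_mem hu haL)]
      exact fun hcu => hγ (mem_image.2 ⟨u, mem_filter.2 ⟨hu, hua⟩, hcu⟩)
    refine ⟨Function.update c a γ, fun v hv => ?_, fun u hu v hv huv => ?_⟩
    · rcases mem_insert.1 hv with rfl | hv
      · simpa using hγd
      · rw [Function.update_of_ne (ne_of_mem_of_not_mem hv haL)]; exact hcd v hv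
    · rcases mem_insert.1 hu with rfl | huL <;> rcases mem_insert.1 hv with hva | hvL
      · exact absurd (hva ▸ huv) G.irrefl
      · exact (hfresh v hvL huv.symm).symm
      · exact hva ▸ hfresh u huL (hva ▸ huv)
      · rw [Function.update_of_ne (ne_of_mem_of_not_mem huL haL),
          Function.update_of_ne (ne_of_mem_of_not_mem hvL haL)]
        exact hc u huL v hvL huv

theorem sum_le_of_backDegree_lt {L : Finset V} {d : ℕ} {w : V → ℝ}
    (hind : ∀ I ⊆ L, (∀ u ∈ I, ∀ v ∈ I, ¬ G.Adj u v) → ∑ v ∈ I, w v ≤ 1)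
    (h : ∀ v ∈ L, G.backDegree L v < d) : ∑ v ∈ L, w v ≤ d := by
  obtain ⟨c, hcd, hc⟩ := exists_coloring_of_backDegree_lt h
  calc ∑ v ∈ L, w v = ∑ γ ∈ range d, ∑ v ∈ L.filter (c · = γ), w v :=
        (sum_fiberwise_of_maps_to (fun v hv => mem_range.2 (hcd v hv)) w).symm
    _ ≤ ∑ γ ∈ range d, (1 : ℝ) := sum_le_sum fun γ _ => hind _ (filter_subset _ _)
          fun u hu v hv huv => hc u (mem_filter.1 hu).1 v (mem_filter.1 hv).1 huv
            ((mem_filter.1 hu).2.trans (mem_filter.1 hv).2.symm)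
    _ = d := by simp

theorem sum_backDegree_le_edgesIn [Fintype V] (X : Finset V) :
    ∑ v ∈ X, G.backDegree X v ≤ edgesIn G X := by
  simp only [backDegree]
  rw [← card_sigma]
  refine card_le_card_of_injOn (fun p => s(p.2, p.1)) (fun p hp => ?_) fun p hp q hq hpq => ?_
  · obtain ⟨hp1, hp2⟩ := mem_sigma.1 hp
    obtain ⟨hp2X, -, hadj⟩ := mem_filter.1 hp2
    refine mem_filter.2 ⟨mem_edgeFinset.2 hadj, fun v hv => ?_⟩
    rcases Sym2.mem_iff.1 hv with rfl | rfl <;> assumption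
  · have hp := (mem_filter.1 (mem_sigma.1 (mem_coe.1 hp)).2).2.1
    have hq := (mem_filter.1 (mem_sigma.1 (mem_coe.1 hq)).2).2.1
    rcases Sym2.eq_iff.1 hpq with ⟨h2, h1⟩ | ⟨h2, h1⟩
    · exact Sigma.ext h1 (heq_of_eq h2)
    · exact absurd (hp.trans (h1 ▸ h2 ▸ hq)) (lt_irrefl _)

theorem backDegree_filter_le_of_le {A : Finset V} {u v : V} (huv : u ≤ v) :
    G.backDegree (A.filter (· ≤ v)) u = G.backDegree A u := by
  simp only [backDegree, filter_filter]
  congr 1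
  exact filter_congr fun y _ => ⟨fun h => h.2, fun h => ⟨h.1.le.trans huv, h⟩⟩

theorem two_mul_card_lt_of_edgesIn_lt [Fintype V] {X H : Finset V} {d : ℕ} (hHX : H ⊆ X)
    (hdeg : ∀ u ∈ H, d ≤ G.backDegree X u) (hsparse : 2 * edgesIn G X < d * #X) :
    2 * #H < #X := by
  have hH : d * #H ≤ edgesIn G X := calc
    d * #H ≤ ∑ u ∈ H, G.backDegree X u := by
      simpa [mul_comm] using card_nsmul_le_sum H _ d hdeg
    _ ≤ ∑ u ∈ X, G.backDegree X u := sum_le_sum_of_subset hHX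
    _ ≤ edgesIn G X := sum_backDegree_le_edgesIn X
  exact Nat.lt_of_mul_lt_mul_left (a := d) (by linarith)

theorem two_mul_card_filter_le_lt [Fintype V] {A H : Finset V} {d : ℕ} {v : V} (hHA : H ⊆ A)
    (hdeg : ∀ u ∈ H, d ≤ G.backDegree A u)
    (hsparse : 2 * edgesIn G (A.filter (· ≤ v)) < d * #(A.filter (· ≤ v))) :
    2 * #(H.filter (· ≤ v)) < #(A.filter (· ≤ v)) :=
  two_mul_card_lt_of_edgesIn_lt (filter_subset_filter _ hHA) (fun u hu => by
    rw [backDegree_filter_le_of_le (mem_filter.1 hu).2]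
    exact hdeg u (mem_filter.1 hu).1) hsparse

end SimpleGraph

open SimpleGraph

theorem weight_bound_of_no_principal_general {V : Type*} [Fintype V] [LinearOrder V]
    (G : SimpleGraph V) [DecidableRel G.Adj]
    (w : V → ℝ) (hw0 : ∀ v, 0 ≤ w v)
    (hmono : ∀ a b : V, a ≤ b → w b ≤ w a)
    (s x : ℝ) (hs : 1 ≤ s) (A : Finset V)
    (hA : ∀ X ⊆ A, ¬ (IsPrincipal s Finset.univ X ∧
          x ≤ 2 * (edgesIn G X : ℝ) / X.card))
    (hind : ∀ I ⊆ A, (∀ u ∈ I, ∀ v ∈ I, ¬ G.Adj u v) → ∑ v ∈ I, w v ≤ 1) :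
    ∑ v ∈ A, w v ≤ 2 * (⌊x + 1⌋₊ : ℝ) + (2 / s) * ∑ v, w v := by
  classical
  set d := ⌊x + 1⌋₊
  set good := A.filter fun v => IsPrincipal s univ (A.filter (· ≤ v))
  set H := good.filter fun v => d ≤ G.backDegree A v
  set L := good.filter fun v => ¬ d ≤ G.backDegree A v
  set B := A.filter fun v => ¬ IsPrincipal s univ (A.filter (· ≤ v))
  have hLA : L ⊆ A := (filter_subset _ _).trans (filter_subset _ _)
  have hH : 2 * ∑ v ∈ H, w v ≤ ∑ v ∈ A, w v :=
    mul_sum_le_sum_of_mul_card_filter_le hmono hw0 fun v hv => by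
      have hprin := (mem_filter.1 (mem_filter.1 hv).1).2
      exact_mod_cast (two_mul_card_filter_le_lt ((filter_subset _ _).trans (filter_subset _ _))
        (fun u hu => (mem_filter.1 hu).2) (two_mul_edgesIn_lt_floor_mul_card hprin.1
          fun h => hA _ (filter_subset _ _) ⟨hprin, h⟩)).le
  have hL : ∑ v ∈ L, w v ≤ d :=
    sum_le_of_backDegree_lt (fun I hI => hind I (hI.trans hLA)) fun v hv =>
      (backDegree_mono hLA v).trans_lt (not_le.1 (mem_filter.1 hv).2)
  have hB : s * ∑ v ∈ B, w v ≤ ∑ v, w v :=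
    mul_sum_le_sum_of_mul_card_filter_le hmono hw0 fun v hv => calc
      s * #(B.filter (· ≤ v)) ≤ s * #(A.filter (· ≤ v)) := by
        gcongr; exact filter_subset _ _
      _ ≤ #(univ.filter (· ≤ v)) := (mul_card_filter_le_lt_of_not_isPrincipal (subset_univ A)
        (mem_filter.1 hv).1 (mem_filter.1 hv).2).le
  have hsplit : ∑ v ∈ A, w v = ∑ v ∈ H, w v + ∑ v ∈ L, w v + ∑ v ∈ B, w v := by
    rw [sum_filter_add_sum_filter_not, sum_filter_add_sum_filter_not]
  have hB' : 2 * ∑ v ∈ B, w v ≤ 2 / s * ∑ v, w v := by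
    rw [div_mul_eq_mul_div, le_div_iff₀ (by linarith)]
    linarith
  linarith

theorem weight_bound_of_no_principal {V : Type*} [Fintype V] [LinearOrder V]
    (G : SimpleGraph V) [DecidableRel G.Adj]
    (w : V → ℝ) (hw0 : ∀ v, 0 ≤ w v)
    (hmono : ∀ a b : V, a ≤ b → w b ≤ w a)
    (s x : ℝ) (hs : 1 ≤ s) (hx : 0 ≤ x) (A : Finset V)
    (hA : ∀ X ⊆ A, ¬ (IsPrincipal s Finset.univ X ∧
          x ≤ 2 * (edgesIn G X : ℝ) / X.card))
    (hind : ∀ I ⊆ A, (∀ u ∈ I, ∀ v ∈ I, ¬ G.Adj u v) → ∑ v ∈ I, w v ≤ 1) :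
    ∑ v ∈ A, w v ≤ 2 * (⌊x + 1⌋₊ : ℝ) + (2 / s) * ∑ v, w v :=
  weight_bound_of_no_principal_general G w hw0 hmono s x hs A hA hind
end

section
/- Let G be a finite simple graph on vertex set V, let w : V → ℝ≥0 be a weight function, and fix a linear order on V along which w is non-increasing. Let s ≥ 1 and x ≥ 0 be real numbers, and let A ⊆ V be a vertex set that contains no nonempty subset that is s-principal in V and has average degree at least x in G. Define L = {v ∈ A : v has at least x neighbors u in A with u preceding v in the order}. Then ∑_{v∈L} w(v) ≤ (1/2)·∑_{v∈A} w(v) + (1/s)·∑_{v∈V} w(v). (The average degree of a nonempty set X in G is 2·e_G(X)/|X|, where e_G(X) is the number of edges of G with both endpoints in X.) -/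
/-!
For a prefix `P` of the order put `X = A ∩ P` and let `L` be the set of vertices with at
least `x` earlier neighbours in `A`. If `X` is `s`-principal it is sparse, `2 e(X) < x |X|`, while every
vertex of `L ∩ P` has its `≥ x` earlier neighbours inside `X`, so `x |L ∩ P| ≤ e(X)`; hence
`|L ∩ P| < |X| / 2`. If `X` is not principal then `|X| < |P| / s`. Either way
`|L ∩ P| ≤ |A ∩ P| / 2 + |P| / s`, and since `w` is nonnegative and non-increasing, the weighted
inequality is a nonnegative combination of these prefix inequalities (Abel summation).
-/

open Finset

section PrefixSums

variable {ι R : Type*} [LinearOrder ι] [Ring R] [PartialOrder R] [IsOrderedRing R]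

theorem Finset.sum_mul_nonneg_of_prefix_sum_nonneg (S : Finset ι) {d w : ι → R}
    (hw0 : ∀ i ∈ S, 0 ≤ w i) (hw : AntitoneOn w S)
    (hd : ∀ i ∈ S, 0 ≤ ∑ j ∈ S with j ≤ i, d j) : 0 ≤ ∑ i ∈ S, d i * w i := by
  induction S using Finset.induction_on_max generalizing w with
  | empty => simp
  | insert a S hlt ih =>
    have ha : a ∉ S := fun h => lt_irrefl a (hlt a h)
    have hprefix : ∀ i ∈ S, (insert a S).filter (· ≤ i) = S.filter (· ≤ i) := by
      intro i hi
      rw [filter_insert, if_neg (hlt i hi).not_ge]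
    have htotal : (insert a S).filter (· ≤ a) = insert a S :=
      filter_true_of_mem fun j hj => (mem_insert.mp hj).elim le_of_eq fun h => (hlt j h).le
    -- Subtracting the smallest weight `w a` leaves a nonnegative antitone weight on `S`.
    have hsplit : ∑ i ∈ insert a S, d i * w i
        = ∑ i ∈ S, d i * (w i - w a) + (∑ i ∈ insert a S, d i) * w a := by
      simp only [sum_insert ha, mul_sub, sum_sub_distrib, add_mul, sum_mul]
      abel
    rw [hsplit]
    refine add_nonneg (ih (fun i hi => sub_nonneg.mpr ?_) ?_ fun i hi => ?_) ?_
    · exact hw (mem_insert_of_mem hi) (mem_insert_self a S) (hlt i hi).le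
    · exact fun i hi j hj hij => sub_le_sub_right
        (hw (mem_insert_of_mem hi) (mem_insert_of_mem hj) hij) _
    · rw [← hprefix i hi]
      exact hd i (mem_insert_of_mem hi)
    · refine mul_nonneg ?_ (hw0 a (mem_insert_self a S))
      rw [← htotal]
      exact hd a (mem_insert_self a S)

theorem Finset.sum_mul_le_sum_mul_of_prefix_sum_le (S : Finset ι) {f g w : ι → R}
    (hw0 : ∀ i ∈ S, 0 ≤ w i) (hw : AntitoneOn w S)
    (h : ∀ i ∈ S, ∑ j ∈ S with j ≤ i, f j ≤ ∑ j ∈ S with j ≤ i, g j) :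
    ∑ i ∈ S, f i * w i ≤ ∑ i ∈ S, g i * w i := by
  have := S.sum_mul_nonneg_of_prefix_sum_nonneg (d := g - f) hw0 hw fun i hi => by
    simpa only [Pi.sub_apply, sum_sub_distrib, sub_nonneg] using h i hi
  simpa only [Pi.sub_apply, sub_mul, sum_sub_distrib, sub_nonneg] using this

end PrefixSums

section FirstK

variable {α : Type*} [LinearOrder α]

theorem firstK_subset (Y : Finset α) (k : ℕ) : firstK Y k ⊆ Y := fun a ha => by
  rw [firstK, List.mem_toFinset] at ha
  exact (mem_sort _).mp (List.mem_of_mem_take ha)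

theorem card_firstK (Y : Finset α) (k : ℕ) : #(firstK Y k) = min k #Y := by
  rw [firstK, List.toFinset_card_of_nodup ((sort_nodup _ _).sublist (List.take_sublist _ _)),
    List.length_take, length_sort]

theorem mem_firstK_of_lt {Y : Finset α} {k : ℕ} {a b : α} (ha : a ∈ Y) (hb : b ∈ firstK Y k)
    (hab : a < b) : a ∈ firstK Y k := by
  rw [firstK, List.mem_toFinset] at hb ⊢
  by_contra ha'
  have hsorted := pairwise_sort Y (· ≤ ·)
  rw [← List.take_append_drop k (Y.sort (· ≤ ·)), List.pairwise_append] at hsorted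
  have had : a ∈ (Y.sort (· ≤ ·)).drop k := by
    have := (mem_sort (· ≤ ·)).mpr ha
    rw [← List.take_append_drop k (Y.sort (· ≤ ·)), List.mem_append] at this
    exact this.resolve_left ha'
  exact (hsorted.2.2 b hb a had).not_gt hab

theorem subset_firstK_of_card_le {Y P : Finset α} {k : ℕ} (hPY : P ⊆ Y)
    (hP : ∀ a ∈ Y, ∀ b ∈ P, a < b → a ∈ P) (hk : #P ≤ k) : P ⊆ firstK Y k := by
  intro u hu
  by_contra hu'
  have hsub : firstK Y k ⊆ P.erase u := by
    intro y hy
    have hyu : y ≠ u := fun h => hu' (h ▸ hy)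
    refine mem_erase.mpr ⟨hyu, ?_⟩
    rcases hyu.lt_or_gt with hlt | hgt
    · exact hP y (firstK_subset Y k hy) u hu hlt
    · exact absurd (mem_firstK_of_lt (hPY hu) hy hgt) hu'
  have h1 := card_le_card hsub
  have h2 := card_le_card hPY
  rw [card_firstK, card_erase_of_mem hu] at h1
  have : 0 < #P := card_pos.mpr ⟨u, hu⟩
  omega

end FirstK

section BackNeighbors

variable {V : Type*} [LinearOrder V] (G : SimpleGraph V) [DecidableRel G.Adj]

def backNeighbors (A : Finset V) (v : V) : Finset V := A.filter fun u => u < v ∧ G.Adj u v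

theorem backNeighbors_inter_of_isLowerSet {A P : Finset V} (hP : IsLowerSet (P : Set V))
    {v : V} (hv : v ∈ P) : backNeighbors G (A ∩ P) v = backNeighbors G A v := by
  ext u
  simp only [backNeighbors, mem_filter, mem_inter, and_congr_left_iff, and_iff_left_iff_imp]
  exact fun huv _ => hP huv.1.le hv

theorem sum_card_backNeighbors_eq_edgesIn [Fintype V] (X : Finset V) :
    ∑ v ∈ X, #(backNeighbors G X v) = edgesIn G X := by
  -- Each edge is counted once, at its larger endpoint.
  have hedges : G.edgeFinset.filter (fun e => ∀ v ∈ e, v ∈ X)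
      = X.biUnion fun v => (backNeighbors G X v).image (s(·, v)) := by
    ext e
    induction e using Sym2.ind with
    | _ a b =>
    simp only [mem_filter, SimpleGraph.mem_edgeFinset, SimpleGraph.mem_edgeSet, Sym2.mem_iff,
      mem_biUnion, mem_image, backNeighbors, Sym2.eq_iff]
    constructor
    · rintro ⟨hab, hX⟩
      rcases lt_or_gt_of_ne hab.ne with h | h
      · exact ⟨b, hX b (Or.inr rfl), a, ⟨hX a (Or.inl rfl), h, hab⟩, Or.inl ⟨rfl, rfl⟩⟩
      · exact ⟨a, hX a (Or.inl rfl), b, ⟨hX b (Or.inr rfl), h, hab.symm⟩,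
          Or.inr ⟨rfl, rfl⟩⟩
    · rintro ⟨v, hv, u, ⟨hu, -, huv⟩, ⟨rfl, rfl⟩ | ⟨rfl, rfl⟩⟩
      · exact ⟨huv, by rintro w (rfl | rfl) <;> assumption⟩
      · exact ⟨huv.symm, by rintro w (rfl | rfl) <;> assumption⟩
  have hdisj : (X : Set V).PairwiseDisjoint fun v => (backNeighbors G X v).image (s(·, v)) := by
    intro v _ v' _ hne
    simp only [Function.onFun, disjoint_left, mem_image, backNeighbors, mem_filter]
    rintro e ⟨u, ⟨-, huv, -⟩, rfl⟩ ⟨u', ⟨-, hu'v', -⟩, he⟩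
    rcases Sym2.eq_iff.mp he with ⟨-, h⟩ | ⟨rfl, rfl⟩
    · exact hne h.symm
    · exact lt_asymm huv hu'v'
  rw [edgesIn, hedges, card_biUnion hdisj]
  exact sum_congr rfl fun v _ => (card_image_of_injective _ fun u u' h => Sym2.congr_left.mp h).symm

end BackNeighbors

section HighBackDegree

variable {V : Type*} [Fintype V] [LinearOrder V] (G : SimpleGraph V) [DecidableRel G.Adj]

noncomputable def highBackDegree (A : Finset V) (x : ℝ) : Finset V :=
  A.filter fun v => x ≤ (#(backNeighbors G A v) : ℝ)

theorem mul_card_highBackDegree_inter_le_edgesIn {A P : Finset V} (x : ℝ)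
    (hP : IsLowerSet (P : Set V)) : x * #(highBackDegree G A x ∩ P) ≤ edgesIn G (A ∩ P) := by
  have hsub : highBackDegree G A x ∩ P ⊆ A ∩ P :=
    inter_subset_inter_right (filter_subset _ _)
  calc x * #(highBackDegree G A x ∩ P)
      = ∑ _v ∈ highBackDegree G A x ∩ P, x := by rw [sum_const, nsmul_eq_mul, mul_comm]
    _ ≤ ∑ v ∈ highBackDegree G A x ∩ P, (#(backNeighbors G (A ∩ P) v) : ℝ) := by
      refine sum_le_sum fun v hv => ?_
      rw [backNeighbors_inter_of_isLowerSet G hP (mem_inter.mp hv).2]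
      exact (mem_filter.mp (mem_inter.mp hv).1).2
    _ ≤ ∑ v ∈ A ∩ P, (#(backNeighbors G (A ∩ P) v) : ℝ) :=
      sum_le_sum_of_subset_of_nonneg hsub fun _ _ _ => Nat.cast_nonneg _
    _ = edgesIn G (A ∩ P) := by rw [← sum_card_backNeighbors_eq_edgesIn, Nat.cast_sum]

theorem card_highBackDegree_inter_le {s x : ℝ} (hs : 0 < s) {A P : Finset V}
    (hA : ∀ X ⊆ A, ¬ (IsPrincipal s univ X ∧ x ≤ 2 * (edgesIn G X : ℝ) / #X))
    (hP : IsLowerSet (P : Set V)) :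
    (#(highBackDegree G A x ∩ P) : ℝ) ≤ #(A ∩ P) / 2 + #P / s := by
  set X := A ∩ P
  have hLX : (#(highBackDegree G A x ∩ P) : ℝ) ≤ #X :=
    mod_cast card_le_card (inter_subset_inter_right (filter_subset _ _))
  have hPs : (0 : ℝ) ≤ #P / s := by positivity
  by_cases hprin : IsPrincipal s univ X
  · have hX : (0 : ℝ) < #X := mod_cast card_pos.mpr hprin.1
    have hsparse : 2 * (edgesIn G X : ℝ) < x * #X :=
      (div_lt_iff₀ hX).mp (not_le.mp fun h => hA X inter_subset_left ⟨hprin, h⟩)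
    have hback := mul_card_highBackDegree_inter_le_edgesIn G (A := A) x hP
    have hx : 0 < x :=
      pos_of_mul_pos_left ((by positivity : (0 : ℝ) ≤ 2 * edgesIn G X).trans_lt hsparse) hX.le
    have : 2 * (#(highBackDegree G A x ∩ P) : ℝ) < #X :=
      lt_of_mul_lt_mul_left (by linarith) hx.le
    linarith
  · have hsmall : s * #X ≤ #P := by
      rcases X.eq_empty_or_nonempty with hX | hX
      · simp [hX]
      have hPk : ¬ #P ≤ ⌊s * #X⌋₊ := fun hk => hprin
        ⟨hX, inter_subset_right.trans (subset_firstK_of_card_le (subset_univ P)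
          (fun a _ b hb hab => hP hab.le hb) hk)⟩
      exact ((Nat.floor_lt (by positivity)).mp (not_le.mp hPk)).le
    have : (#X : ℝ) ≤ #P / s := by rw [le_div_iff₀ hs]; linarith
    linarith

end HighBackDegree

open Classical in
theorem weight_of_high_backdegree_vertices_general {V : Type*} [Fintype V] [LinearOrder V]
    (G : SimpleGraph V) [DecidableRel G.Adj]
    (w : V → ℝ) (hw0 : ∀ v, 0 ≤ w v)
    (hmono : ∀ a b : V, a ≤ b → w b ≤ w a)
    (s x : ℝ) (hs : 1 ≤ s) (A : Finset V)
    (hA : ∀ X ⊆ A, ¬ (IsPrincipal s Finset.univ X ∧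
          x ≤ 2 * (edgesIn G X : ℝ) / X.card)) :
    ∑ v ∈ A.filter (fun v => x ≤ ((A.filter fun u => u < v ∧ G.Adj u v).card : ℝ)), w v ≤
      (1 / 2) * ∑ v ∈ A, w v + (1 / s) * ∑ v, w v := by
  have hs0 : 0 < s := by linarith
  have hprefix (v : V) : IsLowerSet ((univ.filter (· ≤ v) : Finset V) : Set V) := by
    simpa [Set.Iic] using isLowerSet_Iic v
  have key := univ.sum_mul_le_sum_mul_of_prefix_sum_le
    (f := fun v => if v ∈ highBackDegree G A x then 1 else 0)
    (g := fun v => (if v ∈ A then 1 / 2 else 0) + 1 / s) (w := w)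
    (fun v _ => hw0 v) (fun a _ b _ hab => hmono a b hab) fun v _ => by
      simpa only [sum_add_distrib, sum_ite_mem, sum_const, nsmul_eq_mul, mul_one, inter_comm,
        mul_one_div] using card_highBackDegree_inter_le G hs0 hA (hprefix v)
  simp only [ite_mul, one_mul, zero_mul, add_mul, sum_add_distrib, sum_ite_mem, univ_inter,
    ← mul_sum] at key
  exact key

open Classical in
theorem weight_of_high_backdegree_vertices {V : Type*} [Fintype V] [LinearOrder V]
    (G : SimpleGraph V) [DecidableRel G.Adj]
    (w : V → ℝ) (hw0 : ∀ v, 0 ≤ w v)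
    (hmono : ∀ a b : V, a ≤ b → w b ≤ w a)
    (s x : ℝ) (hs : 1 ≤ s) (hx : 0 ≤ x) (A : Finset V)
    (hA : ∀ X ⊆ A, ¬ (IsPrincipal s Finset.univ X ∧
          x ≤ 2 * (edgesIn G X : ℝ) / X.card)) :
    ∑ v ∈ A.filter (fun v => x ≤ ((A.filter fun u => u < v ∧ G.Adj u v).card : ℝ)), w v ≤
      (1 / 2) * ∑ v ∈ A, w v + (1 / s) * ∑ v, w v :=
  weight_of_high_backdegree_vertices_general G w hw0 hmono s x hs A hA
end
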